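/- arXiv:2502.10653 — 2 statements merged into one kernel-verified Lean document; each statement's English description precedes it below -/
import Mathlib

section
/- Finite-set regret bound for risk-aware decisions: Let Π be a finite set, V : Π → ℝ, V̂ : Π → ℝ, ŝ : Π → (0,∞), and k ≥ 0. Let V_max = max_{π∈Π} V(π), Π₀ = {π : V(π) = V_max}, and define Ẑ_π = (V̂(π) − V(π))/ŝ(π). Let π̂ maximize V̂(π) − k ŝ(π) over Π. Suppose max_{π∈Π} Ẑ_π ≤ q and min_{π∈Π₀} Ẑ_π ≥ −q₀ for constants q, q₀ ≥ 0. Then V_max − V(π̂) ≤ (min_{π∈Π₀} ŝ(π))·(q₀ + k) + (max_{π∈Π} ŝ(π))·max(q − k, 0). -/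
/-- Deterministic regret bound for risk-aware decisions (core of Proposition 1). -/
theorem regret_bound_risk_aware
    {ι : Type*} [Fintype ι] [Nonempty ι]
    (V Vh s : ι → ℝ) (hs : ∀ i, 0 < s i)
    (k : ℝ) (hk : 0 ≤ k) (q q0 : ℝ) (hq : 0 ≤ q) (hq0 : 0 ≤ q0)
    (Vmax : ℝ) (hVmax : Vmax = Finset.univ.sup' Finset.univ_nonempty V)
    (P0 : Finset ι) (hP0 : ∀ i, i ∈ P0 ↔ V i = Vmax) (hP0ne : P0.Nonempty)
    (hup : ∀ i, (Vh i - V i) / s i ≤ q)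
    (hlo : ∀ i ∈ P0, -q0 ≤ (Vh i - V i) / s i)
    (πh : ι) (hπh : ∀ i, Vh i - k * s i ≤ Vh πh - k * s πh) :
    Vmax - V πh ≤ (P0.inf' hP0ne s) * (q0 + k)
      + (Finset.univ.sup' Finset.univ_nonempty s) * max (q - k) 0 := by
  obtain ⟨i0, hi0P, hi0⟩ := Finset.exists_mem_eq_inf' hP0ne s
  have hVi0 : V i0 = Vmax := (hP0 i0).mp hi0P
  have hsi0 : 0 < s i0 := hs i0
  have hsπ : 0 < s πh := hs πh
  -- lower bound for Vh i0
  have h1 : -q0 * s i0 ≤ Vh i0 - V i0 :=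
    (le_div_iff₀ hsi0).mp (hlo i0 hi0P)
  have h2 : Vh πh - V πh ≤ q * s πh := by
    exact (div_le_iff₀ hsπ).mp (hup πh)
  have h3 := hπh i0
  have hsmax : s πh ≤ Finset.univ.sup' Finset.univ_nonempty s :=
    Finset.le_sup' s (Finset.mem_univ πh)
  have hqk : (q - k) * s πh ≤ (Finset.univ.sup' Finset.univ_nonempty s) * max (q - k) 0 := by
    rcases le_or_gt (q - k) 0 with h | h
    · have : (q - k) * s πh ≤ 0 := mul_nonpos_of_nonpos_of_nonneg h hsπ.le
      have hm : max (q - k) 0 = 0 := max_eq_right h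
      rw [hm, mul_zero]; exact this
    · have hm : max (q - k) 0 = q - k := max_eq_left h.le
      rw [hm]
      calc (q - k) * s πh ≤ (q - k) * (Finset.univ.sup' Finset.univ_nonempty s) :=
            mul_le_mul_of_nonneg_left hsmax h.le
        _ = _ := mul_comm _ _
  rw [hi0, ← hVi0]
  nlinarith [h1, h2, h3, hqk]
end

section
/- Equivalence of the fractional maximum and the root: Let Π ⊂ ℝ^d be nonempty compact with √(πᵀΩπ) ≥ c > 0 for all π ∈ Π, Ω positive definite, z ∈ ℝ^d with max_{π∈Π} πᵀz ≥ 0. Let t* be the unique root of f(t) = max_{π∈Π}(πᵀz − t√(πᵀΩπ)) = 0 on [0,∞). Then t* = max_{π∈Π} πᵀz/√(πᵀΩπ). -/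
open Matrix

private lemma cont_aux {d : Type*} [Fintype d] (Om : Matrix d d ℝ) (z : d → ℝ) (t : ℝ) :
    Continuous (fun π : d → ℝ => π ⬝ᵥ z - t * Real.sqrt (π ⬝ᵥ Om.mulVec π)) := by
  have h1 : Continuous (fun π : d → ℝ => π ⬝ᵥ z) := by
    simp only [dotProduct]
    exact continuous_finset_sum _ fun i _ => (continuous_apply i).mul continuous_const
  have h2 : Continuous (fun π : d → ℝ => π ⬝ᵥ Om.mulVec π) := by
    simp only [dotProduct, Matrix.mulVec]
    exact continuous_finset_sum _ fun i _ => (continuous_apply i).mul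
      (continuous_finset_sum _ fun j _ => continuous_const.mul (continuous_apply j))
  exact h1.sub (continuous_const.mul (Real.continuous_sqrt.comp h2))

/-- Equivalence of the fractional maximum and the root: the unique root `t*` of
`f(t) = max_{π∈Π}(πᵀz - t√(πᵀΩπ)) = 0` equals `max_{π∈Π} πᵀz / √(πᵀΩπ)`. -/
theorem root_eq_fractional_max
    {d : Type*} [Fintype d] [DecidableEq d]
    (Om : Matrix d d ℝ) (hOm : Om.PosDef) (z : d → ℝ)
    (P : Set (d → ℝ)) (hPne : P.Nonempty) (hPc : IsCompact P)
    (c : ℝ) (hc : 0 < c)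
    (hlb : ∀ π ∈ P, c ≤ Real.sqrt (π ⬝ᵥ Om.mulVec π))
    (hf0 : 0 ≤ ⨆ π : P, ((π : d → ℝ) ⬝ᵥ z))
    (tstar : ℝ) (htpos : 0 ≤ tstar)
    (hroot : (⨆ π : P, ((π : d → ℝ) ⬝ᵥ z
      - tstar * Real.sqrt ((π : d → ℝ) ⬝ᵥ Om.mulVec (π : d → ℝ)))) = 0) :
    tstar = ⨆ π : P,
      ((π : d → ℝ) ⬝ᵥ z / Real.sqrt ((π : d → ℝ) ⬝ᵥ Om.mulVec (π : d → ℝ))) := by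
  haveI : Nonempty P := hPne.to_subtype
  set g : (d → ℝ) → ℝ :=
    fun π => π ⬝ᵥ z - tstar * Real.sqrt (π ⬝ᵥ Om.mulVec π) with hg
  set r : (d → ℝ) → ℝ :=
    fun π => π ⬝ᵥ z / Real.sqrt (π ⬝ᵥ Om.mulVec π) with hr
  have hgc : Continuous g := cont_aux Om z tstar
  have hsqrt : ∀ π ∈ P, 0 < Real.sqrt (π ⬝ᵥ Om.mulVec π) :=
    fun π hπ => lt_of_lt_of_le hc (hlb π hπ)
  -- bounded above of g on P
  have hbddg : BddAbove (Set.range fun π : P => g π) := by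
    rw [← Set.image_eq_range]
    exact (hPc.image hgc).bddAbove
  -- each g π ≤ 0
  have hgle : ∀ π ∈ P, g π ≤ 0 := by
    intro π hπ
    have := le_ciSup hbddg (⟨π, hπ⟩ : P)
    exact this.trans hroot.le
  -- hence r π ≤ tstar
  have hrle : ∀ π ∈ P, r π ≤ tstar := by
    intro π hπ
    have hs := hsqrt π hπ
    have : π ⬝ᵥ z ≤ tstar * Real.sqrt (π ⬝ᵥ Om.mulVec π) := by
      have := hgle π hπ; simp only [hg] at this; linarith
    rw [hr]
    exact (div_le_iff₀ hs).2 (by linarith [this])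
  have hbddr : BddAbove (Set.range fun π : P => r π) :=
    ⟨tstar, by rintro x ⟨π, rfl⟩; exact hrle π π.2⟩
  -- sup of ratios ≤ tstar
  have h1 : (⨆ π : P, r π) ≤ tstar := ciSup_le fun π => hrle π π.2
  -- g attains its sup at some π₀
  obtain ⟨π₀, hπ₀, hmax⟩ := hPc.exists_isMaxOn hPne hgc.continuousOn
  have hsup_eq : (⨆ π : P, g π) = g π₀ :=
    le_antisymm (ciSup_le fun π => hmax π.2) (le_ciSup hbddg ⟨π₀, hπ₀⟩)
  have hg0 : g π₀ = 0 := by rw [← hsup_eq]; exact hroot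
  have hs0 := hsqrt π₀ hπ₀
  have hr0 : r π₀ = tstar := by
    have : π₀ ⬝ᵥ z = tstar * Real.sqrt (π₀ ⬝ᵥ Om.mulVec π₀) := by
      simp only [hg] at hg0; linarith
    simp only [hr]; rw [this]; field_simp
  have h2 : tstar ≤ ⨆ π : P, r π := by
    rw [← hr0]
    exact le_ciSup hbddr (⟨π₀, hπ₀⟩ : P)
  exact le_antisymm h2 h1
end
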